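/- Uniqueness of graph completion from effective resistances: let I ⊔ J partition the unordered pairs of [n], let w: I → ℝ_{≥0} and r: J → ℝ_{>0}. Then there is at most one connected weighted graph G on [n] whose edge weight on every pair in I equals w and whose effective resistance on every pair in J equals r. Equivalently, if two connected weighted graphs G, H on [n] agree on edge weights for all pairs in I and satisfy res_G(i,j) = res_H(i,j) for all (i,j) ∈ J, then G = H. -/

import Mathlib

open Matrix

/-- `B` is the Moore–Penrose pseudoinverse of `A`. -/
def IsMoorePenrose {V : Type*} [Fintype V] [DecidableEq V] (A B : Matrix V V ℝ) : Prop :=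
  A * B * A = A ∧ B * A * B = B ∧ (A * B)ᵀ = A * B ∧ (B * A)ᵀ = B * A

/-- Effective resistance between `u` and `v`, given a matrix `M` playing the role of the
pseudoinverse of the Laplacian: `(1_u - 1_v)ᵀ M (1_u - 1_v)`. -/
noncomputable def effRes {V : Type*} [Fintype V] [DecidableEq V]
    (M : Matrix V V ℝ) (u v : V) : ℝ :=
  (Pi.single u 1 - Pi.single v 1) ⬝ᵥ (M *ᵥ (Pi.single u 1 - Pi.single v 1))

/-- A symmetric, nonnegative edge-weight function with zero diagonal,
encoding a weighted graph (weight `0` means no edge). -/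
structure IsWeight {V : Type*} (w : V → V → ℝ) : Prop where
  symm : ∀ u v, w u v = w v u
  nonneg : ∀ u v, 0 ≤ w u v
  loopless : ∀ v, w v v = 0

/-- The support graph of a weight function: `u ~ v` iff `u ≠ v` and `w u v ≠ 0`. -/
def supportGraph {V : Type*} (w : V → V → ℝ) : SimpleGraph V :=
  SimpleGraph.fromRel fun u v => w u v ≠ 0

/-- The weighted graph Laplacian `L = D - A`. -/
noncomputable def wLap {V : Type*} [Fintype V] [DecidableEq V] (w : V → V → ℝ) :
    Matrix V V ℝ :=
  Matrix.diagonal (fun v => ∑ u, w v u) - Matrix.of w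

/-!
Regularize both Laplacians by the projection `P = J/n` onto the constants: connectivity makes
`A = L_G + P` and `B = L_H + P` positive definite, with `A⁻¹ = L_G⁺ + P` and `B⁻¹ = L_H⁺ + P`.
Since `B - A = L_H - L_G` is the Laplacian of `w_H - w_G`, which vanishes on `I`, we get
`2 tr((A⁻¹ - B⁻¹)(B - A)) = ∑ (w_H - w_G)(u, v) (res_G - res_H)(u, v) = 0`, the resistances
agreeing on `J`. This is the gap between the gradients `A⁻¹`, `B⁻¹` of the strictly concave
`log det` paired with `B - A`, so `A = B`: concretely `A⁻¹ - B⁻¹ = A⁻¹ (B - A) B⁻¹` turns the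
pairing into a squared Frobenius norm.
-/

namespace Matrix

open scoped ComplexOrder

variable {𝕜 n : Type*} [RCLike 𝕜] [Fintype n] [DecidableEq n]

open scoped MatrixOrder in
theorem PosDef.eq_zero_of_trace_mul_mul_mul_eq_zero {P Q D : Matrix n n 𝕜} (hP : P.PosDef)
    (hQ : Q.PosDef) (hD : D.IsHermitian) (h : (P * D * Q * D).trace = 0) : D = 0 := by
  obtain ⟨x, hx, rfl⟩ := CStarAlgebra.isStrictlyPositive_iff_eq_star_mul_self.mp
    hP.isStrictlyPositive
  obtain ⟨y, hy, rfl⟩ := CStarAlgebra.isStrictlyPositive_iff_eq_star_mul_self.mp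
    hQ.isStrictlyPositive
  -- the trace is the squared Frobenius norm of `x D yᴴ`
  have hN : x * D * yᴴ = 0 := by
    rw [← trace_mul_conjTranspose_self_eq_zero_iff, ← h, star_eq_conjTranspose,
      star_eq_conjTranspose, conjTranspose_mul, conjTranspose_mul, conjTranspose_conjTranspose,
      hD.eq]
    simp only [Matrix.mul_assoc]
    rw [trace_mul_comm xᴴ]
    simp only [Matrix.mul_assoc]
  rw [Matrix.mul_assoc, hx.mul_right_eq_zero] at hN
  exact hy.star.mul_left_eq_zero.mp hN

theorem PosDef.eq_of_trace_inv_sub_mul_sub_eq_zero {A B : Matrix n n 𝕜} (hA : A.PosDef)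
    (hB : B.PosDef) (h : ((A⁻¹ - B⁻¹) * (B - A)).trace = 0) : A = B := by
  have := hA.isUnit.invertible
  have := hB.isUnit.invertible
  rw [← invOf_eq_nonsing_inv, ← invOf_eq_nonsing_inv, invOf_sub_invOf, invOf_eq_nonsing_inv,
    invOf_eq_nonsing_inv] at h
  exact (sub_eq_zero.mp (hA.inv.eq_zero_of_trace_mul_mul_mul_eq_zero hB.inv (hB.1.sub hA.1) h)).symm

end Matrix

theorem IsMoorePenrose.inv_add_eq_add {V : Type*} [Fintype V] [DecidableEq V]
    {L Lp P : Matrix V V ℝ} (h : IsMoorePenrose L Lp) (hL : Lᵀ = L) (hLP : L * P = 0)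
    (hPL : P * L = 0) (hP : P * P = P) (hA : IsUnit (L + P)) : (L + P)⁻¹ = Lp + P := by
  obtain ⟨h₁, h₂, h₃, h₄⟩ := h
  have hLpP : Lp * P = 0 :=
    calc Lp * P = Lp * (L * Lp)ᵀ * P := by rw [h₃, ← Matrix.mul_assoc, h₂]
      _ = Lp * Lpᵀ * (L * P) := by rw [transpose_mul, hL]; simp only [Matrix.mul_assoc]
      _ = 0 := by rw [hLP, Matrix.mul_zero]
  have hPLp : P * Lp = 0 :=
    calc P * Lp = P * (Lp * L)ᵀ * Lp := by rw [h₄, Matrix.mul_assoc P, h₂]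
      _ = P * L * Lpᵀ * Lp := by rw [transpose_mul, hL]; simp only [Matrix.mul_assoc]
      _ = 0 := by rw [hPL, Matrix.zero_mul, Matrix.zero_mul]
  -- both sides equal `L` after multiplying by the unit `L + P` on the right
  have hLLp : L * Lp = 1 - P := by
    refine hA.mul_left_inj.mp ?_
    rw [Matrix.mul_add, h₁, Matrix.mul_assoc, hLpP, Matrix.mul_zero, add_zero, Matrix.sub_mul,
      Matrix.one_mul, Matrix.mul_add, hPL, hP, zero_add, add_sub_cancel_right]
  refine inv_eq_right_inv ?_
  rw [Matrix.add_mul, Matrix.mul_add, Matrix.mul_add, hLLp, hLP, hPLp, hP]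
  abel

section Laplacian

open Finset

variable {V : Type*} [Fintype V]

theorem two_mul_sum_sum_mul_of_symm {d : V → V → ℝ} (hd : ∀ u v, d u v = d v u)
    (f : V → V → ℝ) :
    2 * ∑ u, ∑ v, d u v * f u v = ∑ u, ∑ v, d u v * (f u v + f v u) := by
  have hswap : ∑ u, ∑ v, d u v * f v u = ∑ u, ∑ v, d u v * f u v := by
    rw [Finset.sum_comm]
    exact sum_congr rfl fun u _ => sum_congr rfl fun v _ => by rw [hd]
  simp only [mul_add, sum_add_distrib, hswap]
  ring

noncomputable def constProj (V : Type*) [Fintype V] : Matrix V V ℝ :=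
  of fun _ _ => (Fintype.card V : ℝ)⁻¹

theorem constProj_transpose : (constProj V)ᵀ = constProj V := rfl

theorem constProj_mul_self [Nonempty V] : constProj V * constProj V = constProj V := by
  ext u v
  simp [constProj, mul_apply]

theorem dotProduct_constProj_mulVec (x : V → ℝ) :
    x ⬝ᵥ constProj V *ᵥ x = (∑ u, x u) ^ 2 / Fintype.card V := by
  simp only [constProj, dotProduct, mulVec, of_apply, ← mul_sum, ← sum_mul]
  ring

variable [DecidableEq V]

theorem wLap_apply_of_ne (w : V → V → ℝ) {u v : V} (h : u ≠ v) : wLap w u v = -w u v := by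
  simp [wLap, h]

theorem wLap_sub (w₁ w₂ : V → V → ℝ) : wLap (w₁ - w₂) = wLap w₁ - wLap w₂ := by
  ext u v
  by_cases h : u = v
  · subst h
    simp only [wLap, Matrix.sub_apply, diagonal_apply_eq, of_apply, Pi.sub_apply,
      sum_sub_distrib]
    ring
  · simp only [Matrix.sub_apply, wLap_apply_of_ne _ h, Pi.sub_apply]
    ring

theorem wLap_transpose {w : V → V → ℝ} (hw : ∀ u v, w u v = w v u) : (wLap w)ᵀ = wLap w := by
  ext u v
  by_cases h : u = v
  · subst h; rfl
  · rw [transpose_apply, wLap_apply_of_ne _ h, wLap_apply_of_ne _ (Ne.symm h), hw]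

theorem wLap_mul_constProj (w : V → V → ℝ) : wLap w * constProj V = 0 := by
  ext u v
  simp [constProj, wLap, mul_apply, Matrix.sub_apply, diagonal_apply, ← sum_mul]

theorem constProj_mul_wLap {w : V → V → ℝ} (hw : ∀ u v, w u v = w v u) :
    constProj V * wLap w = 0 := by
  rw [← transpose_transpose (constProj V * _), transpose_mul, wLap_transpose hw,
    constProj_transpose, wLap_mul_constProj, transpose_zero]

theorem dotProduct_wLap_mulVec (w : V → V → ℝ) (x : V → ℝ) :
    x ⬝ᵥ wLap w *ᵥ x = ∑ u, ∑ v, w u v * (x u * (x u - x v)) := by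
  rw [wLap, sub_mulVec, dotProduct_sub]
  simp only [dotProduct, mulVec_diagonal]
  simp only [mulVec, dotProduct, of_apply, sum_mul, mul_sum, ← sum_sub_distrib]
  refine sum_congr rfl fun u _ => sum_congr rfl fun v _ => ?_
  ring

theorem two_mul_dotProduct_wLap_mulVec {w : V → V → ℝ} (hw : ∀ u v, w u v = w v u)
    (x : V → ℝ) : 2 * (x ⬝ᵥ wLap w *ᵥ x) = ∑ u, ∑ v, w u v * (x u - x v) ^ 2 := by
  rw [dotProduct_wLap_mulVec, two_mul_sum_sum_mul_of_symm hw]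
  congr! 3
  ring

theorem trace_wLap_mul (w : V → V → ℝ) (M : Matrix V V ℝ) :
    (wLap w * M).trace = ∑ u, ∑ v, w u v * (M u u - M v u) := by
  rw [wLap, Matrix.sub_mul, trace_sub]
  simp only [trace, Matrix.diag, diagonal_mul]
  simp only [mul_apply, of_apply, sum_mul, ← sum_sub_distrib]
  refine sum_congr rfl fun u _ => sum_congr rfl fun v _ => ?_
  ring

theorem effRes_eq_entries (M : Matrix V V ℝ) (u v : V) :
    effRes M u v = M u u + M v v - M u v - M v u := by
  simp only [effRes, mulVec_sub, mulVec_single_one, sub_dotProduct, dotProduct_sub,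
    single_one_dotProduct, col_apply]
  ring

theorem effRes_sub (M N : Matrix V V ℝ) (u v : V) :
    effRes (M - N) u v = effRes M u v - effRes N u v := by
  simp only [effRes_eq_entries, Matrix.sub_apply]
  ring

theorem two_mul_trace_wLap_mul {w : V → V → ℝ} (hw : ∀ u v, w u v = w v u)
    (M : Matrix V V ℝ) : 2 * (wLap w * M).trace = ∑ u, ∑ v, w u v * effRes M u v := by
  rw [trace_wLap_mul, two_mul_sum_sum_mul_of_symm hw]
  congr! 3
  rw [effRes_eq_entries]
  ring

theorem eq_of_wLap_eq {w₁ w₂ : V → V → ℝ} (h₁ : ∀ v, w₁ v v = 0) (h₂ : ∀ v, w₂ v v = 0)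
    (h : wLap w₁ = wLap w₂) : w₁ = w₂ := by
  ext u v
  by_cases huv : u = v
  · rw [huv, h₁, h₂]
  · simpa [wLap_apply_of_ne _ huv] using congrFun (congrFun h u) v

end Laplacian

section Connected

open Finset

variable {V : Type*} [Fintype V] [DecidableEq V] {w : V → V → ℝ}

theorem IsWeight.dotProduct_wLap_mulVec_nonneg (hw : IsWeight w) (x : V → ℝ) :
    0 ≤ x ⬝ᵥ wLap w *ᵥ x := by
  have h := two_mul_dotProduct_wLap_mulVec hw.symm x
  have : 0 ≤ ∑ u, ∑ v, w u v * (x u - x v) ^ 2 :=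
    sum_nonneg fun u _ => sum_nonneg fun v _ => mul_nonneg (hw.nonneg u v) (sq_nonneg _)
  linarith

theorem IsWeight.eq_of_dotProduct_wLap_mulVec_eq_zero (hw : IsWeight w)
    (hconn : (supportGraph w).Connected) {x : V → ℝ} (hx : x ⬝ᵥ wLap w *ᵥ x = 0) (u v : V) :
    x u = x v := by
  have hterm : ∀ u v, w u v * (x u - x v) ^ 2 = 0 := by
    intro u v
    have hsum := two_mul_dotProduct_wLap_mulVec hw.symm x
    rw [hx, mul_zero, eq_comm] at hsum
    have h0 u v : 0 ≤ w u v * (x u - x v) ^ 2 := mul_nonneg (hw.nonneg u v) (sq_nonneg _)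
    rw [sum_eq_zero_iff_of_nonneg fun u _ => sum_nonneg fun v _ => h0 u v] at hsum
    exact (sum_eq_zero_iff_of_nonneg fun v _ => h0 u v).mp (hsum u (mem_univ u)) v (mem_univ v)
  have hadj : ∀ u v, (supportGraph w).Adj u v → x u = x v := by
    intro u v huv
    rw [supportGraph, SimpleGraph.fromRel_adj, hw.symm v u, or_self] at huv
    simpa [huv.2, sub_eq_zero] using hterm u v
  obtain ⟨p⟩ := hconn.preconnected u v
  induction p with
  | nil => rfl
  | cons h _ ih => exact (hadj _ _ h).trans ih

theorem IsWeight.posDef_wLap_add_constProj (hw : IsWeight w)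
    (hconn : (supportGraph w).Connected) : (wLap w + constProj V).PosDef := by
  have : Nonempty V := hconn.nonempty
  refine .of_dotProduct_mulVec_pos ?_ fun x hx => ?_
  · rw [IsHermitian, conjTranspose_eq_transpose_of_trivial, transpose_add, wLap_transpose hw.symm,
      constProj_transpose]
  rw [star_trivial, add_mulVec, dotProduct_add, dotProduct_constProj_mulVec]
  have hL := hw.dotProduct_wLap_mulVec_nonneg x
  refine lt_of_le_of_ne (by positivity) fun h => hx ?_
  have hL0 : x ⬝ᵥ wLap w *ᵥ x = 0 := by
    have : 0 ≤ (∑ u, x u) ^ 2 / Fintype.card V := by positivity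
    linarith
  have hsum : ∑ u, x u = 0 := by
    rw [hL0, zero_add, eq_comm] at h
    simpa using h
  obtain ⟨v₀⟩ := ‹Nonempty V›
  have hconst := hw.eq_of_dotProduct_wLap_mulVec_eq_zero hconn hL0
  simp_rw [hconst _ v₀, sum_const, card_univ, nsmul_eq_mul, mul_eq_zero, Nat.cast_eq_zero,
    Fintype.card_ne_zero, false_or] at hsum
  ext u
  rw [hconst u v₀, hsum, Pi.zero_apply]

theorem IsMoorePenrose.inv_wLap_add_constProj {Lp : Matrix V V ℝ}
    (hLp : IsMoorePenrose (wLap w) Lp) (hw : IsWeight w) (hconn : (supportGraph w).Connected) :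
    (wLap w + constProj V)⁻¹ = Lp + constProj V :=
  have : Nonempty V := hconn.nonempty
  hLp.inv_add_eq_add (wLap_transpose hw.symm) (wLap_mul_constProj w)
    (constProj_mul_wLap hw.symm) constProj_mul_self (hw.posDef_wLap_add_constProj hconn).isUnit

end Connected

theorem graph_completion_unique_general {n : ℕ} (I J : Set (Sym2 (Fin n)))
    (hcover : I ∪ J = {e : Sym2 (Fin n) | ¬ e.IsDiag})
    (wG wH : Fin n → Fin n → ℝ) (hwG : IsWeight wG) (hwH : IsWeight wH)
    (hGconn : (supportGraph wG).Connected) (hHconn : (supportGraph wH).Connected)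
    (LpG LpH : Matrix (Fin n) (Fin n) ℝ)
    (hLpG : IsMoorePenrose (wLap wG) LpG) (hLpH : IsMoorePenrose (wLap wH) LpH)
    (hI : ∀ i j : Fin n, s(i, j) ∈ I → wG i j = wH i j)
    (hJ : ∀ i j : Fin n, s(i, j) ∈ J → effRes LpG i j = effRes LpH i j) :
    wG = wH := by
  have hsymm u v : (wH - wG) u v = (wH - wG) v u := by simp [hwG.symm u v, hwH.symm u v]
  have hterm u v : (wH - wG) u v * effRes (LpG - LpH) u v = 0 := by
    rw [effRes_sub, Pi.sub_apply, Pi.sub_apply, mul_eq_zero, sub_eq_zero, sub_eq_zero]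
    by_cases huv : u = v
    · exact .inl (by rw [huv, hwG.loopless, hwH.loopless])
    have : s(u, v) ∈ I ∪ J := by simpa [hcover] using huv
    exact this.imp (fun hu => (hI u v hu).symm) (hJ u v)
  have htrace : (wLap (wH - wG) * (LpG - LpH)).trace = 0 := by
    have := two_mul_trace_wLap_mul hsymm (LpG - LpH)
    rw [Fintype.sum_eq_zero _ fun u => Fintype.sum_eq_zero _ (hterm u)] at this
    linarith
  refine eq_of_wLap_eq hwG.loopless hwH.loopless (add_right_cancel (b := constProj (Fin n)) ?_)
  refine (hwG.posDef_wLap_add_constProj hGconn).eq_of_trace_inv_sub_mul_sub_eq_zero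
    (hwH.posDef_wLap_add_constProj hHconn) ?_
  rw [hLpG.inv_wLap_add_constProj hwG hGconn, hLpH.inv_wLap_add_constProj hwH hHconn,
    add_sub_add_right_eq_sub, add_sub_add_right_eq_sub, ← wLap_sub, trace_mul_comm, htrace]

/-- Uniqueness of graph completion from effective resistances: if `I ⊔ J` partitions the
unordered pairs of distinct vertices, and two connected weighted graphs agree on edge
weights for all pairs in `I` and on effective resistances for all pairs in `J`, then the
graphs are equal. -/
theorem graph_completion_unique {n : ℕ} (I J : Set (Sym2 (Fin n)))
    (hdisj : Disjoint I J) (hcover : I ∪ J = {e : Sym2 (Fin n) | ¬ e.IsDiag})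
    (wG wH : Fin n → Fin n → ℝ) (hwG : IsWeight wG) (hwH : IsWeight wH)
    (hGconn : (supportGraph wG).Connected) (hHconn : (supportGraph wH).Connected)
    (LpG LpH : Matrix (Fin n) (Fin n) ℝ)
    (hLpG : IsMoorePenrose (wLap wG) LpG) (hLpH : IsMoorePenrose (wLap wH) LpH)
    (hI : ∀ i j : Fin n, s(i, j) ∈ I → wG i j = wH i j)
    (hJ : ∀ i j : Fin n, s(i, j) ∈ J → effRes LpG i j = effRes LpH i j) :
    wG = wH :=
  graph_completion_unique_general I J hcover wG wH hwG hwH hGconn hHconn LpG LpH hLpG hLpH hI hJ
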